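/- arXiv:1805.10315 — 2 statements merged into one kernel-verified Lean document; each statement's English description precedes it below -/
import Mathlib

section
/- Let A be a commutative ring (or ℝ-algebra), let Der(A) be its A-module of derivations, and let div : Der(A) → A be an additive map satisfying div(a·D) = a·div(D) + D(a) for all a ∈ A and D ∈ Der(A). If {·,·} is a Poisson bracket on A, then the map Z : A → A defined by Z(a) = div({a, ·}) is a derivation of A, i.e. Z(ab) = a·Z(b) + b·Z(a). -/
/- STATEMENT 3: For a Poisson bracket {·,·} on a commutative ℝ-algebra A and a
divergence operator div : Der(A) → A (ℝ-linear with div(aD) = a div D + D a),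
the modular map Z(a) = div({a,·}) is a derivation: Z(ab) = a Z(b) + b Z(a).
Here `ham a` is the Hamiltonian derivation D_a = {a,·}. -/
theorem modular_map_is_derivation {A : Type*} [CommRing A] [Algebra ℝ A]
    (bracket : A → A → A)
    (ham : A → Derivation ℝ A A)
    (hham : ∀ a b : A, ham a b = bracket a b)
    (hskew : ∀ a b : A, bracket a b = -bracket b a)
    (hjacobi : ∀ a b c : A,
      bracket a (bracket b c) = bracket (bracket a b) c + bracket b (bracket a c))
    (hleibniz : ∀ a b c : A, bracket a (b * c) = b * bracket a c + c * bracket a b)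
    (dvg : Derivation ℝ A A →ₗ[ℝ] A)
    (hdiv : ∀ (a : A) (D : Derivation ℝ A A), dvg (a • D) = a * dvg D + D a) :
    ∀ a b : A, dvg (ham (a * b)) = a * dvg (ham b) + b * dvg (ham a) := by
  intro a b
  have key : ham (a * b) = a • ham b + b • ham a := by
    ext c
    simp only [Derivation.add_apply, Derivation.coe_smul, Pi.smul_apply, smul_eq_mul]
    rw [hham, hham, hham, hskew a, hskew b, hskew (a*b) c, hleibniz]
    ring
  rw [key, map_add, hdiv, hdiv, hham, hham, hskew a b]
  ring
end

section
/- Let M be an oriented manifold with volume form ωⁿ, E → M a vector bundle with fiber metric g and a metric connection ∇ (∇g = 0), and μ_g the metric volume section of Λᵐ E*. For any vector field X on M and any compactly supported section s ∈ Γ(ΛE): ∫_M i_{μ_g}(∇_X s) ωⁿ = −∫_M div^{ωⁿ}(X) · (i_{μ_g}s) ωⁿ. In other words, the Berezinian divergence of the derivation ∇_X equals div^{ωⁿ}(X). -/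
/- STATEMENT 10: With μ_g the metric volume section of a metric bundle (E,g,∇)
(∇g = 0, hence ∇_X μ_g = 0) over an oriented manifold with volume ωⁿ, for every
vector field X and compactly supported section s:
∫ i_{μ_g}(∇_X s) ωⁿ = −∫ div^{ωⁿ}(X) (i_{μ_g} s) ωⁿ,
i.e. the Berezinian divergence of the derivation ∇_X is div^{ωⁿ}(X).

Model: `A` = smooth functions, vector fields = `Derivation ℝ A A`, `S` = Γ(ΛE),
`nab X` = covariant derivative (Leibniz rule `hleib`), `c` = full contraction
with μ_g (A-linear), with `hmetric : c(∇_X s) = X(c s)` encoding ∇_X μ_g = 0,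
`I h = ∫ h ωⁿ`, `dvg X = div^{ωⁿ}(X)` with Leibniz rule `hdivleib`, and
`hStokes : ∫ div^{ωⁿ}(Y) ωⁿ = 0` (Stokes' theorem). -/
theorem berezinian_divergence_of_covariant_derivative
    {A S : Type*} [CommRing A] [Algebra ℝ A] [AddCommGroup S] [Module A S]
    (nab : Derivation ℝ A A → S →+ S)
    (hleib : ∀ (X : Derivation ℝ A A) (f : A) (s : S),
      nab X (f • s) = X f • s + f • nab X s)
    (c : S →ₗ[A] A)
    (hmetric : ∀ (X : Derivation ℝ A A) (s : S), c (nab X s) = X (c s))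
    (I : A →ₗ[ℝ] ℝ)
    (dvg : Derivation ℝ A A → A)
    (hdivleib : ∀ (f : A) (X : Derivation ℝ A A), dvg (f • X) = f * dvg X + X f)
    (hStokes : ∀ Y : Derivation ℝ A A, I (dvg Y) = 0)
    (X : Derivation ℝ A A) (s : S) :
    I (c (nab X s)) = - I (dvg X * c s) := by
  have h := hStokes (c s • X)
  rw [hdivleib, map_add] at h
  rw [hmetric]
  have : I (X (c s)) = - I (c s * dvg X) := by linarith
  rw [this, mul_comm]
end
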